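/- Under the hypotheses of the Enhanced Diamond Lemma, any two directed paths from a common vertex to terminal vertices end at the same terminal vertex and are equivalent as paths. -/
import Mathlib


/-- Undirected walks in a directed graph: edges may be traversed forwards
(`consF`) or backwards (`consB`). -/
inductive Walk {V : Type*} (E : V → V → Prop) : V → V → Type _
  | nil (x : V) : Walk E x x
  | consF {x y z : V} (h : E x y) (w : Walk E y z) : Walk E x z
  | consB {x y z : V} (h : E y x) (w : Walk E y z) : Walk E x z

namespace Walk

variable {V : Type*} {E : V → V → Prop}

/-- Concatenation of walks. -/
def append : ∀ {x y z : V}, Walk E x y → Walk E y z → Walk E x z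
  | _, _, _, nil _, q => q
  | _, _, _, consF h p, q => consF h (p.append q)
  | _, _, _, consB h p, q => consB h (p.append q)

/-- The reverse of a walk. -/
def reverse : ∀ {x y : V}, Walk E x y → Walk E y x
  | _, _, nil x => nil x
  | _, _, consF h p => p.reverse.append (consB h (nil _))
  | _, _, consB h p => p.reverse.append (consF h (nil _))

/-- A walk is directed if all its edges are traversed forwards. -/
inductive IsDirected : ∀ {x y : V}, Walk E x y → Prop
  | nil (x : V) : IsDirected (nil x)
  | consF {x y z : V} (h : E x y) {w : Walk E y z} :
      IsDirected w → IsDirected (consF h w)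

end Walk

/-- An equivalence relation on undirected paths between each pair of vertices,
satisfying the trivial-cycles axiom and the invariance axiom (equivalence is
preserved and reflected by extending both paths with a common edge, at either
endpoint, in either orientation). -/
structure PathEquiv {V : Type*} (E : V → V → Prop) where
  eqv : ∀ {x y : V}, Walk E x y → Walk E x y → Prop
  refl : ∀ {x y : V} (p : Walk E x y), eqv p p
  symm : ∀ {x y : V} {p q : Walk E x y}, eqv p q → eqv q p
  trans : ∀ {x y : V} {p q r : Walk E x y}, eqv p q → eqv q r → eqv p r
  /-- Trivial cycles: `f⁻¹ · f` is equivalent to the trivial path at the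
  starting vertex of `f`. -/
  trivial_cycle : ∀ {x y : V} (p : Walk E x y),
    eqv (p.append p.reverse) (Walk.nil x)
  /-- Invariance under extension by a forward edge at the far endpoint. -/
  inv_right_F : ∀ {x y z : V} (p q : Walk E x y) (h : E y z),
    eqv p q ↔ eqv (p.append (Walk.consF h (Walk.nil z)))
      (q.append (Walk.consF h (Walk.nil z)))
  /-- Invariance under extension by a backward edge at the far endpoint. -/
  inv_right_B : ∀ {x y z : V} (p q : Walk E x y) (h : E z y),
    eqv p q ↔ eqv (p.append (Walk.consB h (Walk.nil z)))
      (q.append (Walk.consB h (Walk.nil z)))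
  /-- Invariance under extension by a forward edge at the starting vertex. -/
  inv_left_F : ∀ {w x y : V} (p q : Walk E x y) (h : E w x),
    eqv p q ↔ eqv (Walk.consF h p) (Walk.consF h q)
  /-- Invariance under extension by a backward edge at the starting vertex. -/
  inv_left_B : ∀ {w x y : V} (p q : Walk E x y) (h : E x w),
    eqv p q ↔ eqv (Walk.consB h p) (Walk.consB h q)

namespace Walk

variable {V : Type*} {E : V → V → Prop}

theorem append_assoc' : ∀ {x y z w : V} (p : Walk E x y) (q : Walk E y z)
    (r : Walk E z w), (p.append q).append r = p.append (q.append r)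
  | _, _, _, _, nil _, _, _ => rfl
  | _, _, _, _, consF h p, q, r => by
      simp only [append, append_assoc' p q r]
  | _, _, _, _, consB h p, q, r => by
      simp only [append, append_assoc' p q r]

theorem isDirected_append : ∀ {x y z : V} {p : Walk E x y} {q : Walk E y z},
    p.IsDirected → q.IsDirected → (p.append q).IsDirected := by
  intro x y z p q hp hq
  induction hp with
  | nil => exact hq
  | consF h _ ih => exact .consF h (ih hq)

end Walk

theorem PathEquiv.eqv_append_right {V : Type*} {E : V → V → Prop}
    (S : PathEquiv E) : ∀ {x y z : V} {p q : Walk E x y} (t : Walk E y z),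
    S.eqv p q → S.eqv (p.append t) (q.append t) := by
  have append_nil : ∀ {x y : V} (p : Walk E x y), p.append (Walk.nil y) = p := by
    intro x y p
    induction p with
    | nil => rfl
    | consF e p ih => simp only [Walk.append, ih]
    | consB e p ih => simp only [Walk.append, ih]
  intro x y z p q t
  induction t with
  | nil => rw [append_nil, append_nil]; exact id
  | consF h w ih =>
    intro hpq
    have := ih ((S.inv_right_F p q h).mp hpq)
    rwa [Walk.append_assoc', Walk.append_assoc'] at this
  | consB h w ih =>
    intro hpq
    have := ih ((S.inv_right_B p q h).mp hpq)
    rwa [Walk.append_assoc', Walk.append_assoc'] at this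

/-- **Uniqueness of the normal form (Step 2 of the Enhanced Diamond Lemma).**
Under the hypotheses of the Enhanced Diamond Lemma, any two directed paths
from a common vertex to terminal vertices end at the same terminal vertex and
are equivalent as paths. -/
theorem enhanced_diamond_unique_normal_form {V : Type*} (E : V → V → Prop)
    (S : PathEquiv E)
    (dcc : WellFounded (fun a b => E b a))
    (ediamond : ∀ (x y z : V) (h₁ : E x y) (h₂ : E x z),
      ∃ (w : V) (p : Walk E y w) (q : Walk E z w),
        p.IsDirected ∧ q.IsDirected ∧
          S.eqv (Walk.consF h₁ p) (Walk.consF h₂ q)) :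
    ∀ {x y z : V} (p : Walk E x y) (q : Walk E x z),
      p.IsDirected → q.IsDirected →
      (∀ u : V, ¬ E y u) → (∀ u : V, ¬ E z u) →
      ∃ h : y = z, S.eqv (h ▸ p) q := by
  classical
  -- every vertex has a directed path to a terminal vertex
  have toNF : ∀ x : V, ∃ (n : V) (t : Walk E x n), t.IsDirected ∧ ∀ u, ¬ E n u := by
    intro x
    induction x using WellFounded.induction dcc with
    | _ x ih =>
      by_cases hx : ∃ u, E x u
      · obtain ⟨u, hu⟩ := hx
        obtain ⟨n, t, ht, hn⟩ := ih u hu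
        exact ⟨n, .consF hu t, .consF hu ht, hn⟩
      · exact ⟨x, .nil x, .nil x, fun u h => hx ⟨u, h⟩⟩
  suffices main : ∀ x : V, ∀ {y z : V} (p : Walk E x y) (q : Walk E x z),
      p.IsDirected → q.IsDirected →
      (∀ u : V, ¬ E y u) → (∀ u : V, ¬ E z u) →
      ∃ h : y = z, S.eqv (h ▸ p) q by
    intro x y z; exact main x
  intro x
  induction x using WellFounded.induction dcc with
  | _ x ih =>
    intro y z p q hp hq hy hz
    cases hp with
    | nil =>
      cases hq with
      | nil => exact ⟨rfl, S.refl _⟩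
      | consF h _ => exact absurd h (hy _)
    | @consF _ y₁ _ h₁ p' hp' =>
      cases hq with
      | nil => exact absurd h₁ (hz _)
      | @consF _ z₁ _ h₂ q' hq' =>
        obtain ⟨w, r, s, hr, hs, he⟩ := ediamond _ _ _ h₁ h₂
        obtain ⟨n, t, ht, hn⟩ := toNF w
        obtain ⟨rfl, e1⟩ := ih y₁ h₁ p' (r.append t) hp'
          (Walk.isDirected_append hr ht) hy hn
        obtain ⟨rfl, e2⟩ := ih z₁ h₂ q' (s.append t) hq'
          (Walk.isDirected_append hs ht) hz hn
        refine ⟨rfl, ?_⟩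
        have h3 : S.eqv ((Walk.consF h₁ r).append t) ((Walk.consF h₂ s).append t) :=
          S.eqv_append_right t he
        have h4 : S.eqv (Walk.consF h₁ (r.append t)) (Walk.consF h₂ (s.append t)) := h3
        exact S.trans ((S.inv_left_F _ _ h₁).mp e1)
          (S.trans h4 (S.symm ((S.inv_left_F _ _ h₂).mp e2)))
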